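/- Let d_1, …, d_M ∈ ℝ be pairwise distinct real numbers and L ∈ {0,…,M−1}, and let f(x) = p_L(|x − d_1|, …, |x − d_M|). Then f attains its global minimum over ℝ and min_{x ∈ ℝ} f(x) = min over the finite set Φ = {d_m : 1 ≤ m ≤ M} ∪ {(d_{m₁} + d_{m₂})/2 : 1 ≤ m₁ < m₂ ≤ M} of f; in particular every global minimizer of f belongs to Φ. -/

import Mathlib

/-- The `L`-th percentile of `z : Fin M → ℝ`: the `(L+1)`-th largest entry of `z`
(`Tuple.sort z` sorts in nondecreasing order, so index `M - 1 - L` is the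
`(L+1)`-th largest). -/
noncomputable def percentile {M : ℕ} (L : ℕ) (z : Fin M → ℝ) : ℝ :=
  if h : L < M then z (Tuple.sort z ⟨M - 1 - L, by omega⟩) else 0

open Finset in
lemma percentile_le_iff {M L : ℕ} (hL : L < M) (z : Fin M → ℝ) (a : ℝ) :
    percentile L z ≤ a ↔ M - L ≤ (Finset.univ.filter (fun m => z m ≤ a)).card := by
  classical
  have h := Tuple.lt_card_le_iff_apply_le_of_monotone (f := z ∘ Tuple.sort z) (a := a)
      (Tuple.monotone_sort z) (j := ⟨M - 1 - L, by omega⟩)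
  rw [← Fintype.card_subtype] at h
  have hcard : Fintype.card {i // (z ∘ Tuple.sort z) i ≤ a}
      = (Finset.univ.filter (fun m => z m ≤ a)).card := by
    rw [← Fintype.card_subtype]
    exact Fintype.card_congr ((Tuple.sort z).subtypeEquiv (fun i => Iff.rfl))
  rw [hcard] at h
  rw [percentile, dif_pos hL]
  simp only [Function.comp_apply] at h
  constructor
  · intro hp
    have := h.mpr hp
    omega
  · intro hc
    exact h.mp (by omega)

lemma percentile_mem {M L : ℕ} (hL : L < M) (z : Fin M → ℝ) :
    ∃ m, percentile L z = z m := by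
  rw [percentile, dif_pos hL]; exact ⟨_, rfl⟩

open Finset in
/-- At any point `x`, some midpoint of two data points (possibly equal) does at least
as well as `x`. -/
lemma midpoint_dominates {M L : ℕ} (hL : L < M) (d : Fin M → ℝ) (x : ℝ) :
    ∃ m₁ m₂ : Fin M, percentile L (fun m => |(d m₁ + d m₂) / 2 - d m|) ≤
      percentile L (fun m => |x - d m|) := by
  classical
  set r := percentile L (fun m => |x - d m|) with hr
  set S : Finset (Fin M) := univ.filter (fun m => |x - d m| ≤ r) with hSdef
  have hS : M - L ≤ S.card := (percentile_le_iff hL _ r).mp le_rfl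
  have hne : S.Nonempty := card_pos.mp (by omega)
  obtain ⟨m₁, hm₁, hmin⟩ := S.exists_min_image d hne
  obtain ⟨m₂, hm₂, hmax⟩ := S.exists_max_image d hne
  refine ⟨m₁, m₂, (percentile_le_iff hL _ r).mpr (le_trans hS (card_le_card ?_))⟩
  intro m hm
  have h1 := hmin m hm
  have h2 := hmax m hm
  simp only [hSdef, mem_filter, mem_univ, true_and] at hm hm₁ hm₂ ⊢
  rw [abs_le] at hm hm₁ hm₂ ⊢
  constructor <;> linarith [hm.1, hm.2, hm₁.1, hm₁.2, hm₂.1, hm₂.2]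

open Finset in
/-- If `x` is a global minimizer with value `r`, there is a data point at `x - r`. -/
lemma left_point {M L : ℕ} (hL : L < M) (d : Fin M → ℝ) (x : ℝ)
    (hmin : ∀ y, percentile L (fun m => |x - d m|) ≤ percentile L (fun m => |y - d m|)) :
    ∃ m, d m = x - percentile L (fun m => |x - d m|) := by
  classical
  by_contra hcon
  push_neg at hcon
  set r := percentile L (fun m => |x - d m|) with hr
  set S : Finset (Fin M) := univ.filter (fun m => |x - d m| ≤ r) with hSdef
  have hS : M - L ≤ S.card := (percentile_le_iff hL _ r).mp le_rfl
  have hne : S.Nonempty := card_pos.mp (by omega)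
  obtain ⟨mε, hmε, hεmin⟩ := S.exists_min_image (fun m => d m - (x - r)) hne
  set ε : ℝ := d mε - (x - r) with hε
  have hεpos : 0 < ε := by
    have : |x - d mε| ≤ r := by
      simpa [hSdef] using (mem_filter.mp hmε).2
    rw [abs_le] at this
    rcases lt_or_eq_of_le (by linarith [this.2] : x - r ≤ d mε) with h | h
    · linarith
    · exact absurd h.symm (hcon mε)
  have hlt : percentile L (fun m => |x + ε / 2 - d m|) ≤ r - ε / 2 := by
    refine (percentile_le_iff hL _ _).mpr (le_trans hS (card_le_card ?_))
    intro m hm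
    have hmem : |x - d m| ≤ r := by simpa [hSdef] using (mem_filter.mp hm).2
    have hεle : ε ≤ d m - (x - r) := hεmin m hm
    simp only [mem_filter, mem_univ, true_and]
    rw [abs_le] at hmem ⊢
    constructor <;> linarith [hmem.1, hmem.2]
  have := hmin (x + ε / 2)
  linarith

/-- the scalar robust percentile problem attains its minimum, the minimum
is achieved on the finite set of data points and pairwise midpoints, and every global
minimizer belongs to that finite set. -/
theorem scalar_percentile_minimizers_in_finite_set
    (M : ℕ) (d : Fin M → ℝ) (hdist : Function.Injective d)
    (L : ℕ) (hL : L < M)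
    (f : ℝ → ℝ) (hf : ∀ x, f x = percentile L (fun m => |x - d m|))
    (Φ : Set ℝ)
    (hΦ : Φ = {t | ∃ m : Fin M, t = d m} ∪
      {t | ∃ m₁ m₂ : Fin M, m₁ < m₂ ∧ t = (d m₁ + d m₂) / 2}) :
    (∃ xstar, ∀ x, f xstar ≤ f x) ∧
    sInf (Set.range f) = sInf (f '' Φ) ∧
    (∀ xstar, (∀ x, f xstar ≤ f x) → xstar ∈ Φ) := by
  classical
  have hM : 0 < M := by omega
  -- every "generalized midpoint" is in Φ
  have hmidΦ : ∀ m₁ m₂ : Fin M, (d m₁ + d m₂) / 2 ∈ Φ := by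
    intro m₁ m₂
    rcases lt_trichotomy m₁ m₂ with h | h | h
    · exact hΦ ▸ Or.inr ⟨m₁, m₂, h, rfl⟩
    · subst h
      exact hΦ ▸ Or.inl ⟨m₁, by ring⟩
    · exact hΦ ▸ Or.inr ⟨m₂, m₁, h, by ring_nf⟩
  -- the finite set of all generalized midpoints
  set T : Finset ℝ :=
    Finset.univ.image (fun p : Fin M × Fin M => (d p.1 + d p.2) / 2) with hT
  have hTne : T.Nonempty :=
    ⟨_, Finset.mem_image.mpr ⟨(⟨0, hM⟩, ⟨0, hM⟩), Finset.mem_univ _, rfl⟩⟩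
  obtain ⟨xs, hxsT, hxsmin⟩ := T.exists_min_image f hTne
  have hxsΦ : xs ∈ Φ := by
    simp only [hT, Finset.mem_image, Finset.mem_univ, true_and] at hxsT
    obtain ⟨p, hp⟩ := hxsT
    exact hp ▸ hmidΦ p.1 p.2
  -- xs is a global minimizer
  have hglob : ∀ x, f xs ≤ f x := by
    intro x
    obtain ⟨m₁, m₂, hle⟩ := midpoint_dominates hL d x
    have hmem : (d m₁ + d m₂) / 2 ∈ T := by
      simp only [hT, Finset.mem_image, Finset.mem_univ, true_and]
      exact ⟨(m₁, m₂), rfl⟩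
    calc f xs ≤ f ((d m₁ + d m₂) / 2) := hxsmin _ hmem
      _ ≤ f x := by rw [hf, hf]; exact hle
  refine ⟨⟨xs, hglob⟩, ?_, ?_⟩
  · have h1 : IsLeast (Set.range f) (f xs) :=
      ⟨⟨xs, rfl⟩, by rintro y ⟨x, rfl⟩; exact hglob x⟩
    have h2 : IsLeast (f '' Φ) (f xs) :=
      ⟨⟨xs, hxsΦ, rfl⟩, by rintro y ⟨t, _, rfl⟩; exact hglob t⟩
    rw [h1.csInf_eq, h2.csInf_eq]
  · intro x hx
    have hmin : ∀ y, percentile L (fun m => |x - d m|) ≤ percentile L (fun m => |y - d m|) := by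
      intro y; rw [← hf, ← hf]; exact hx y
    set r := percentile L (fun m => |x - d m|) with hr
    obtain ⟨m₁, hm₁⟩ := left_point hL d x hmin
    -- apply left_point to the reflected data to get a point at x + r
    have e : ∀ y : ℝ, (fun m : Fin M => |y - (-d) m|) = (fun m => |(-y) - d m|) := by
      intro y; funext m
      rw [Pi.neg_apply, show y - -d m = -(-y - d m) by ring, abs_neg]
    have hmin' : ∀ y, percentile L (fun m => |(-x) - (-d) m|) ≤
        percentile L (fun m => |y - (-d) m|) := by
      intro y
      rw [e, e, neg_neg]
      exact hmin (-y)
    obtain ⟨m₂, hm₂⟩ := left_point hL (-d) (-x) hmin'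
    rw [e, neg_neg, ← hr] at hm₂
    rw [Pi.neg_apply] at hm₂
    have hm₂' : d m₂ = x + r := by linarith [hm₂]
    have hx2 : x = (d m₁ + d m₂) / 2 := by rw [hm₁, hm₂']; ring
    exact hx2 ▸ hmidΦ m₁ m₂
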